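/- arXiv:1301.4958 — 5 statements merged into one kernel-verified Lean document; each statement's English description precedes it below -/
import Mathlib

section
/- For any integer l ≥ 1 and real q with 0 < q < 1/2, exp(-(2l-1) · RelEnt(l/(2l-1), q)) ≤ (1/(2-2q)) · (4q(1-q))^l, where RelEnt(x,y) = x·log(x/y) + (1-x)·log((1-x)/(1-y)). -/
/-- Relative entropy (KL divergence) between Bernoulli(x) and Bernoulli(y). -/
noncomputable def relEnt (x y : ℝ) : ℝ :=
  x * Real.log (x / y) + (1 - x) * Real.log ((1 - x) / (1 - y))

theorem stmt_1 (l : ℕ) (hl : 1 ≤ l) (q : ℝ) (hq0 : 0 < q) (hq1 : q < 1/2) :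
    Real.exp (-(2 * (l : ℝ) - 1) * relEnt ((l : ℝ) / (2 * (l : ℝ) - 1)) q)
      ≤ (1 / (2 - 2 * q)) * (4 * q * (1 - q)) ^ l := by
  obtain ⟨m, rfl⟩ := Nat.exists_eq_add_of_le hl
  have hq1' : (0:ℝ) < 1 - q := by linarith
  set N : ℝ := 2 * ((1 + m : ℕ) : ℝ) - 1 with hN
  have hNval : N = 2 * (m:ℝ) + 1 := by push_cast [hN]; ring
  have hN0 : 0 < N := by rw [hNval]; positivity
  set x : ℝ := ((1 + m : ℕ) : ℝ) / N with hx
  have hx0 : 0 < x := by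
    exact div_pos (Nat.cast_pos.mpr (by omega)) hN0
  have hNx : N * x = (m:ℝ) + 1 := by
    rw [hx, mul_div_cancel₀ _ hN0.ne']; push_cast; ring
  have hNx' : N * (1 - x) = (m:ℝ) := by
    have : N * (1 - x) = N - N * x := by ring
    rw [this, hNx, hNval]; ring
  have h1x : 0 ≤ 1 - x := by
    have := hNx'
    nlinarith [hN0, (Nat.cast_nonneg m : (0:ℝ) ≤ (m:ℝ))]
  -- rewrite relEnt
  have hre : relEnt x q = x * (Real.log x - Real.log q)
      + (1 - x) * (Real.log (1 - x) - Real.log (1 - q)) := by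
    rw [relEnt, Real.log_div hx0.ne' hq0.ne']
    rcases eq_or_lt_of_le h1x with h | h
    · rw [← h]; ring_nf
    · rw [Real.log_div h.ne' hq1'.ne']
  have hent : -x * Real.log x - (1 - x) * Real.log (1 - x) ≤ Real.log 2 := by
    have := Real.binEntropy_le_log_two (p := x)
    rw [Real.binEntropy, Real.log_inv, Real.log_inv] at this
    linarith
  have key : -N * relEnt x q ≤ Real.log (2 ^ (2 * m + 1) * q ^ (m + 1) * (1 - q) ^ m) := by
    rw [Real.log_mul (by positivity) (by positivity), Real.log_mul (by positivity) (by positivity),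
      Real.log_pow, Real.log_pow, Real.log_pow]
    have expand : -N * relEnt x q
        = N * (-x * Real.log x - (1 - x) * Real.log (1 - x))
          + (N * x) * Real.log q + (N * (1 - x)) * Real.log (1 - q) := by
      rw [hre]; ring
    rw [expand, hNx, hNx']
    have h2 : N * (-x * Real.log x - (1 - x) * Real.log (1 - x)) ≤ N * Real.log 2 :=
      mul_le_mul_of_nonneg_left hent hN0.le
    have : N * Real.log 2 = ((2 * m + 1 : ℕ) : ℝ) * Real.log 2 := by
      rw [hNval]; push_cast; ring
    have h3 : N * Real.log 2 = (2*(m:ℝ)+1) * Real.log 2 := by rw [hNval]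
    push_cast
    linarith
  have hle := Real.exp_le_exp.mpr key
  rw [Real.exp_log (by positivity)] at hle
  refine hle.trans_eq ?_
  have h2q : (2 : ℝ) - 2 * q ≠ 0 := by linarith
  have h4 : (4*q*(1-q))^(1+m) = (4*q*(1-q)) * (4^m * (q^m * (1-q)^m)) := by
    rw [pow_add, pow_one, mul_pow, mul_pow]; ring
  have h2p : (2:ℝ)^(2*m+1) = 2 * 4^m := by
    rw [pow_succ, pow_mul]; norm_num; ring
  rw [h4, h2p, pow_succ]
  field_simp
  ring
end

section
/- For 0 < p < 1/2, the integral over r from 0 to 1 of (1/(2-2q(r))) · (4q(r)(1-q(r)))^l dr, where q(r) = rp/(1-p+rp), is at most α · c^l, where α = (p + (1-p)·log(1-p)) / (2(1-p)p²) and c = 4p(1-p). -/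
theorem stmt_3 (p : ℝ) (hp0 : 0 < p) (hp1 : p < 1/2) (l : ℕ) (hl : 1 ≤ l) :
    (∫ r in (0:ℝ)..1,
        (1 / (2 - 2 * (r * p / (1 - p + r * p)))) *
          (4 * (r * p / (1 - p + r * p)) * (1 - r * p / (1 - p + r * p))) ^ l)
      ≤ ((p + (1 - p) * Real.log (1 - p)) / (2 * (1 - p) * p ^ 2)) *
          (4 * p * (1 - p)) ^ l := by
  have hp1' : p < 1 := by linarith
  have hD : ∀ r ∈ Set.Icc (0:ℝ) 1, 0 < 1 - p + r * p := by
    intro r hr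
    nlinarith [hr.1, hr.2]
  set c : ℝ := 4 * p * (1 - p) with hc
  -- continuity of q
  have hq_cont : ContinuousOn (fun r : ℝ => r * p / (1 - p + r * p)) (Set.Icc 0 1) :=
    ContinuousOn.div (by fun_prop) (by fun_prop) (fun r hr => (hD r hr).ne')
  have hq_lt_one : ∀ r ∈ Set.Icc (0:ℝ) 1, r * p / (1 - p + r * p) < 1 := by
    intro r hr
    rw [div_lt_one (hD r hr)]
    linarith
  have hq_nonneg : ∀ r ∈ Set.Icc (0:ℝ) 1, 0 ≤ r * p / (1 - p + r * p) := by
    intro r hr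
    exact div_nonneg (mul_nonneg hr.1 hp0.le) (hD r hr).le
  have hq_le_p : ∀ r ∈ Set.Icc (0:ℝ) 1, r * p / (1 - p + r * p) ≤ p := by
    intro r hr
    rw [div_le_iff₀ (hD r hr)]
    nlinarith [hr.1, hr.2, mul_nonneg (mul_nonneg hp0.le (by linarith : (0:ℝ) ≤ 1 - p)) (by linarith [hr.2] : (0:ℝ) ≤ 1 - r)]
  -- integrability of f
  have hf_cont : ContinuousOn (fun r : ℝ =>
      (1 / (2 - 2 * (r * p / (1 - p + r * p)))) *
        (4 * (r * p / (1 - p + r * p)) * (1 - r * p / (1 - p + r * p))) ^ l)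
      (Set.Icc 0 1) := by
    apply ContinuousOn.mul
    · apply ContinuousOn.div continuousOn_const
        (continuousOn_const.sub (continuousOn_const.mul hq_cont))
      intro r hr
      have := hq_lt_one r hr
      intro h
      change (2:ℝ) - 2 * (r * p / (1 - p + r * p)) = 0 at h
      nlinarith
    · exact ((continuousOn_const.mul hq_cont).mul (continuousOn_const.sub hq_cont)).pow l
  have hg_cont : ContinuousOn (fun r : ℝ => c ^ (l - 1) * (2 * r * p / (1 - p + r * p)))
      (Set.Icc 0 1) := by
    apply continuousOn_const.mul
    exact ContinuousOn.div (by fun_prop) (by fun_prop) (fun r hr => (hD r hr).ne')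
  have hf_int : IntervalIntegrable (fun r : ℝ =>
      (1 / (2 - 2 * (r * p / (1 - p + r * p)))) *
        (4 * (r * p / (1 - p + r * p)) * (1 - r * p / (1 - p + r * p))) ^ l)
      MeasureTheory.volume 0 1 := hf_cont.intervalIntegrable_of_Icc (by norm_num)
  have hg_int : IntervalIntegrable (fun r : ℝ => c ^ (l - 1) * (2 * r * p / (1 - p + r * p)))
      MeasureTheory.volume 0 1 := hg_cont.intervalIntegrable_of_Icc (by norm_num)
  -- pointwise bound
  have key : ∀ r ∈ Set.Icc (0:ℝ) 1,
      (1 / (2 - 2 * (r * p / (1 - p + r * p)))) *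
        (4 * (r * p / (1 - p + r * p)) * (1 - r * p / (1 - p + r * p))) ^ l
      ≤ c ^ (l - 1) * (2 * r * p / (1 - p + r * p)) := by
    intro r hr
    have hDr := hD r hr
    set q := r * p / (1 - p + r * p) with hq
    have hq0 : 0 ≤ q := hq_nonneg r hr
    have hqp : q ≤ p := hq_le_p r hr
    have hq1 : q < 1 := hq_lt_one r hr
    obtain ⟨m, hm⟩ : ∃ m, l = m + 1 := ⟨l - 1, (Nat.succ_pred_eq_of_pos hl).symm⟩
    have hml : m = l - 1 := by omega
    have hfeq : (1 / (2 - 2 * q)) * (4 * q * (1 - q)) ^ l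
        = 2 * q * (4 * q * (1 - q)) ^ m := by
      rw [hm, pow_succ]
      have h2q : (2:ℝ) - 2 * q ≠ 0 := by linarith
      have h1q : (1:ℝ) - q ≠ 0 := by linarith
      field_simp
      ring
    rw [hfeq, hml]
    have hx0 : (0:ℝ) ≤ 4 * q * (1 - q) := by nlinarith
    have hxc : 4 * q * (1 - q) ≤ c := by nlinarith
    have hpow : (4 * q * (1 - q)) ^ (l - 1) ≤ c ^ (l - 1) :=
      pow_le_pow_left₀ hx0 hxc _
    calc 2 * q * (4 * q * (1 - q)) ^ (l - 1)
        ≤ 2 * q * c ^ (l - 1) :=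
          mul_le_mul_of_nonneg_left hpow (by linarith)
      _ = c ^ (l - 1) * (2 * r * p / (1 - p + r * p)) := by
          rw [hq]; ring
  have hmono := intervalIntegral.integral_mono_on (by norm_num : (0:ℝ) ≤ 1)
    hf_int hg_int key
  refine hmono.trans ?_
  -- compute the integral of g
  have hF : ∀ x ∈ Set.uIcc (0:ℝ) 1,
      HasDerivAt (fun r => 2 * r - 2 * (1 - p) / p * Real.log (1 - p + r * p))
        (2 * x * p / (1 - p + x * p)) x := by
    intro x hx
    rw [Set.uIcc_of_le (by norm_num)] at hx
    have hDx := hD x hx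
    have h1 : HasDerivAt (fun r : ℝ => 1 - p + r * p) p x := by
      simpa using ((hasDerivAt_id x).mul_const p).const_add (1 - p)
    have h2 : HasDerivAt (fun r : ℝ => Real.log (1 - p + r * p))
        (p / (1 - p + x * p)) x := h1.log hDx.ne'
    have h3 := ((hasDerivAt_id x).const_mul 2).sub (h2.const_mul (2 * (1 - p) / p))
    convert h3 using 1
    · rfl
    · rfl
    · rfl
    field_simp
    ring
  have hbase_int : IntervalIntegrable (fun r : ℝ => 2 * r * p / (1 - p + r * p))
      MeasureTheory.volume 0 1 := by
    apply ContinuousOn.intervalIntegrable_of_Icc (by norm_num)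
    exact ContinuousOn.div (by fun_prop) (by fun_prop) (fun r hr => (hD r hr).ne')
  have hbase : ∫ r in (0:ℝ)..1, 2 * r * p / (1 - p + r * p)
      = 2 + 2 * (1 - p) / p * Real.log (1 - p) := by
    rw [intervalIntegral.integral_eq_sub_of_hasDerivAt hF hbase_int]
    have e1 : (1:ℝ) - p + 1 * p = 1 := by ring
    have e0 : (1:ℝ) - p + 0 * p = 1 - p := by ring
    rw [e1, e0, Real.log_one]
    ring
  have hsplit : (∫ r in (0:ℝ)..1, c ^ (l - 1) * (2 * r * p / (1 - p + r * p)))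
      = c ^ (l - 1) * (2 + 2 * (1 - p) / p * Real.log (1 - p)) := by
    rw [intervalIntegral.integral_const_mul, hbase]
  rw [hsplit]
  -- show equality with RHS
  obtain ⟨m, hm⟩ : ∃ m, l = m + 1 := ⟨l - 1, (Nat.succ_pred_eq_of_pos hl).symm⟩
  have hml : l - 1 = m := by omega
  rw [hml, hm]
  have hp10 : (1:ℝ) - p ≠ 0 := by linarith
  have heq : ((p + (1 - p) * Real.log (1 - p)) / (2 * (1 - p) * p ^ 2)) * c ^ (m + 1)
      = c ^ m * (2 + 2 * (1 - p) / p * Real.log (1 - p)) := by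
    rw [pow_succ c m, hc]
    field_simp
    ring
  rw [heq]
end

section
/- Let Q be a random variable stochastically dominated by a sum of l independent Geometric(p) random variables (number of failures before the l-th success), and conditionally on Q = k let A be Binomial(k, r). Then A is stochastically dominated by the negative binomial distribution counting failures before the l-th success with success probability q' = (1-p)/(1-p+rp); equivalently, P(A ≥ l) is at most the probability that a negative binomial with failure probability q = rp/(1-p+rp) has at least l failures before l successes. -/
open MeasureTheory Finset


noncomputable def nb7 (p : ℝ) (c m : ℕ) : ℝ := ((m + c).choose c : ℝ) * p ^ m * (1 - p) ^ (c + 1)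

noncomputable def bp7 (r : ℝ) (k j : ℕ) : ℝ := (k.choose j : ℝ) * r ^ j * (1 - r) ^ (k - j)

noncomputable def fc7 (r : ℝ) (c k : ℕ) : ℝ := ∑ j ∈ Finset.Ico (c + 1) (k + 1), bp7 r k j

noncomputable def gs7 (r : ℝ) (c k : ℕ) : ℝ := fc7 r c k - fc7 r c (k - 1)

lemma bp7_nonneg {r : ℝ} (hr0 : 0 ≤ r) (hr1 : r ≤ 1) (k j : ℕ) : 0 ≤ bp7 r k j := by
  have h : (0:ℝ) ≤ 1 - r := by linarith
  exact mul_nonneg (mul_nonneg (Nat.cast_nonneg _) (pow_nonneg hr0 _)) (pow_nonneg h _)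

lemma bp7_eq_zero {r : ℝ} {k j : ℕ} (h : k < j) : bp7 r k j = 0 := by
  simp [bp7, Nat.choose_eq_zero_of_lt h]

lemma nb7_nonneg {p : ℝ} (hp0 : 0 ≤ p) (hp1 : p ≤ 1) (c m : ℕ) : 0 ≤ nb7 p c m := by
  have h : (0:ℝ) ≤ 1 - p := by linarith
  exact mul_nonneg (mul_nonneg (Nat.cast_nonneg _) (pow_nonneg hp0 _)) (pow_nonneg h _)

lemma fc7_nonneg {r : ℝ} (hr0 : 0 ≤ r) (hr1 : r ≤ 1) (c k : ℕ) : 0 ≤ fc7 r c k :=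
  Finset.sum_nonneg fun j _ => bp7_nonneg hr0 hr1 k j

lemma fc7_zero (r : ℝ) (c : ℕ) : fc7 r c 0 = 0 := by
  simp [fc7]

lemma fc7_le_one {r : ℝ} (hr0 : 0 ≤ r) (hr1 : r ≤ 1) (c k : ℕ) : fc7 r c k ≤ 1 := by
  have h1 : fc7 r c k ≤ ∑ j ∈ Finset.range (k + 1), bp7 r k j := by
    apply Finset.sum_le_sum_of_subset_of_nonneg
    · intro j hj
      simp only [Finset.mem_Ico] at hj
      exact Finset.mem_range.2 hj.2
    · intro j _ _; exact bp7_nonneg hr0 hr1 k j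
  have h2 : ∑ j ∈ Finset.range (k + 1), bp7 r k j = 1 := by
    have := add_pow r (1 - r) k
    simp only [add_sub_cancel, one_pow] at this
    rw [eq_comm, this]
    apply Finset.sum_congr rfl
    intro j _
    simp [bp7]; ring
  linarith

lemma fc7_succ (r : ℝ) (c k : ℕ) : fc7 r c (k + 1) = fc7 r c k + r * bp7 r k c := by
  rcases lt_or_ge k c with hck | hck
  · have h1 : fc7 r c k = 0 := by
      rw [fc7, Finset.Ico_eq_empty (by omega), Finset.sum_empty]
    have h2 : fc7 r c (k + 1) = 0 := by
      rw [fc7, Finset.Ico_eq_empty (by omega), Finset.sum_empty]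
    rw [h1, h2, bp7, Nat.choose_eq_zero_of_lt hck]
    simp
  · -- c ≤ k
    have expand : fc7 r c (k + 1) = ∑ i ∈ Finset.Ico c (k + 1), bp7 r (k + 1) (i + 1) := by
      rw [fc7, Finset.sum_Ico_add' (fun j => bp7 r (k + 1) j) c (k + 1) 1]
    have step : ∀ i ∈ Finset.Ico c (k + 1),
        bp7 r (k + 1) (i + 1) = r * bp7 r k i + (k.choose (i+1) : ℝ) * r ^ (i+1) * (1 - r) ^ (k - i) := by
      intro i hi
      simp only [Finset.mem_Ico] at hi
      rw [bp7, Nat.choose_succ_succ, Nat.succ_sub_succ]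
      push_cast
      rw [bp7]
      ring
    rw [expand, Finset.sum_congr rfl step, Finset.sum_add_distrib]
    have part1 : ∑ i ∈ Finset.Ico c (k + 1), r * bp7 r k i
        = r * (bp7 r k c + fc7 r c k) := by
      rw [← Finset.mul_sum, Finset.sum_eq_sum_Ico_succ_bot (by omega) (fun i => bp7 r k i)]
      rfl
    have part2 : ∑ i ∈ Finset.Ico c (k + 1), (k.choose (i+1) : ℝ) * r ^ (i+1) * (1 - r) ^ (k - i)
        = (1 - r) * fc7 r c k := by
      have top0 : (k.choose (k+1) : ℝ) = 0 := by
        simp [Nat.choose_eq_zero_of_lt]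
      have drop : ∑ i ∈ Finset.Ico c (k + 1), (k.choose (i+1) : ℝ) * r ^ (i+1) * (1 - r) ^ (k - i)
          = ∑ i ∈ Finset.Ico c k, (k.choose (i+1) : ℝ) * r ^ (i+1) * (1 - r) ^ (k - i) := by
        rw [Finset.sum_Ico_succ_top hck, top0]
        simp
      rw [drop]
      have congr1 : ∀ i ∈ Finset.Ico c k,
          (k.choose (i+1) : ℝ) * r ^ (i+1) * (1 - r) ^ (k - i)
          = (1 - r) * ((k.choose (i+1) : ℝ) * r ^ (i+1) * (1 - r) ^ (k - (i+1))) := by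
        intro i hi
        simp only [Finset.mem_Ico] at hi
        have : k - i = (k - (i + 1)) + 1 := by omega
        rw [this, pow_succ]
        ring
      rw [Finset.sum_congr rfl congr1, ← Finset.mul_sum]
      congr 1
      rw [fc7, ← Finset.sum_Ico_add' (fun j => bp7 r k j) c k 1]
      apply Finset.sum_congr rfl
      intro i _
      rw [bp7]
    rw [part1, part2]
    ring

lemma fc7_mono {r : ℝ} (hr0 : 0 ≤ r) (hr1 : r ≤ 1) (c : ℕ) : Monotone (fun k => fc7 r c k) := by
  apply monotone_nat_of_le_succ
  intro k
  rw [fc7_succ]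
  have := bp7_nonneg hr0 hr1 k c
  nlinarith

lemma gs7_nonneg {r : ℝ} (hr0 : 0 ≤ r) (hr1 : r ≤ 1) (c k : ℕ) : 0 ≤ gs7 r c k := by
  rw [gs7, sub_nonneg]
  exact fc7_mono hr0 hr1 c (Nat.sub_le k 1)

lemma gs7_telescope (r : ℝ) (c m : ℕ) : ∑ k ∈ Finset.range (m + 1), gs7 r c k = fc7 r c m := by
  induction m with
  | zero => simp [gs7, fc7_zero]
  | succ m ih => rw [Finset.sum_range_succ, ih, gs7]; simp

lemma choose_id7 (c j m : ℕ) :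
    ((j + m + c).choose c) * ((j + m).choose j) = ((j + c).choose c) * ((m + (j + c)).choose (j + c)) := by
  have h1 := Nat.choose_mul (n := j + m + c) (k := j + c) (s := c) (by omega)
  have e1 : j + m + c - c = j + m := by omega
  have e2 : j + c - c = j := by omega
  rw [e1, e2] at h1
  have h2 : (j + m + c).choose (j + c) = (m + (j + c)).choose (j + c) := by
    congr 1; omega
  calc ((j + m + c).choose c) * ((j + m).choose j)
      = (j + m + c).choose (j + c) * (j + c).choose c := by rw [h1]
    _ = ((j + c).choose c) * ((m + (j + c)).choose (j + c)) := by rw [h2]; ring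

lemma thin7 {p r : ℝ} (hp0 : 0 < p) (hp1 : p < 1) (hr0 : 0 ≤ r) (hr1 : r ≤ 1) (c j : ℕ) :
    HasSum (fun m => nb7 p c m * bp7 r m j)
      (((j + c).choose c : ℝ) * (r * p / (1 - p + r * p)) ^ j
        * (1 - r * p / (1 - p + r * p)) ^ (c + 1)) := by
  have hs : (0:ℝ) < 1 - p + r * p := by nlinarith
  have hxnorm : ‖p * (1 - r)‖ < 1 := by
    rw [Real.norm_eq_abs, abs_lt]; constructor <;> nlinarith
  have h1 := hasSum_choose_mul_geometric_of_norm_lt_one (j + c) hxnorm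
  have h2 := h1.mul_left (((j + c).choose c : ℝ) * (r * p) ^ j * (1 - p) ^ (c + 1))
  have key : (fun m => ((j + c).choose c : ℝ) * (r * p) ^ j * (1 - p) ^ (c + 1) *
      (((m + (j + c)).choose (j + c) : ℝ) * (p * (1 - r)) ^ m))
      = (fun m => nb7 p c m * bp7 r m j) ∘ (fun m => j + m) := by
    funext m
    have e : j + m - j = m := by omega
    have hcc : (((j + m + c).choose c : ℕ) : ℝ) * (((j + m).choose j : ℕ) : ℝ)
        = (((j + c).choose c : ℕ) : ℝ) * (((m + (j + c)).choose (j + c) : ℕ) : ℝ) := by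
      exact_mod_cast congrArg (Nat.cast : ℕ → ℝ) (choose_id7 c j m)
    show _ = nb7 p c (j + m) * bp7 r (j + m) j
    rw [nb7, bp7, e, show (j + m) + c = j + m + c from rfl]
    rw [mul_pow p (1-r) m, pow_add p j m, mul_pow r p j]
    linear_combination (r^j * p^j * p^m * (1-p)^(c+1) * (1-r)^m) * hcc.symm
  rw [key] at h2
  have hinj : Function.Injective (fun m : ℕ => j + m) := fun a b h => by
    simpa using h
  have hvanish : ∀ m ∉ Set.range (fun m : ℕ => j + m), nb7 p c m * bp7 r m j = 0 := by
    intro m hm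
    have hmj : m < j := by
      by_contra h
      exact hm ⟨m - j, by simp; omega⟩
    rw [bp7_eq_zero hmj, mul_zero]
  have h4 := (Function.Injective.hasSum_iff hinj hvanish).mp h2
  have hval : ((j + c).choose c : ℝ) * (r * p) ^ j * (1 - p) ^ (c + 1) *
      (1 / (1 - p * (1 - r)) ^ (j + c + 1))
      = ((j + c).choose c : ℝ) * (r * p / (1 - p + r * p)) ^ j
        * (1 - r * p / (1 - p + r * p)) ^ (c + 1) := by
    have hsub : 1 - r * p / (1 - p + r * p) = (1 - p) / (1 - p + r * p) := by
      field_simp; ring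
    have hsub2 : 1 - p * (1 - r) = 1 - p + r * p := by ring
    rw [hsub, hsub2, div_pow, div_pow, pow_add, pow_add]
    field_simp
    ring
  rw [← hval]
  exact h4


/-- If Q is stochastically dominated by a sum of l independent Geometric(p)
variables (i.e. by the negative binomial counting failures before the l-th
success), and conditionally on Q = k the variable A is Binomial(k, r), then
P(A ≥ l) is at most the probability that a negative binomial with failure
probability q = rp/(1-p+rp) has at least l failures before l successes. -/
theorem stmt_7 {Ω : Type*} [MeasurableSpace Ω] (μ : Measure Ω)
    [IsProbabilityMeasure μ] (p r : ℝ) (hp0 : 0 < p) (hp1 : p < 1)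
    (hr0 : 0 ≤ r) (hr1 : r ≤ 1) (l : ℕ) (hl : 1 ≤ l)
    (Q A : Ω → ℕ) (hQmeas : Measurable Q) (hAmeas : Measurable A)
    (hQdom : ∀ k : ℕ, (μ {ω | k ≤ Q ω}).toReal
      ≤ ∑' n : ℕ, ((k + n + l - 1).choose (l - 1) : ℝ) * p ^ (k + n) * (1 - p) ^ l)
    (hAcond : ∀ k j : ℕ, (μ {ω | Q ω = k ∧ A ω = j}).toReal
      = (k.choose j : ℝ) * r ^ j * (1 - r) ^ (k - j) * (μ {ω | Q ω = k}).toReal) :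
    (μ {ω | l ≤ A ω}).toReal
      ≤ ∑' n : ℕ, ((l + n + l - 1).choose (l - 1) : ℝ) *
          (r * p / (1 - p + r * p)) ^ (l + n) *
          (1 - r * p / (1 - p + r * p)) ^ l := by
  obtain ⟨c, rfl⟩ : ∃ c, l = c + 1 := ⟨l - 1, by omega⟩
  set q : ℝ := r * p / (1 - p + r * p) with hq_def
  have hs : (0:ℝ) < 1 - p + r * p := by nlinarith
  have hq0 : 0 ≤ q := by
    apply div_nonneg (by nlinarith) (le_of_lt hs)
  have hq1 : q < 1 := by
    rw [hq_def, div_lt_one hs]; nlinarith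
  have h1q : (0:ℝ) ≤ 1 - q := by linarith
  -- abbreviations
  set Pk : ℕ → ℝ := fun k => (μ {ω | Q ω = k}).toReal with hPk_def
  set T : ℕ → ℝ := fun k => (μ {ω | k ≤ Q ω}).toReal with hT_def
  set f : ℕ → ℝ := fun k => fc7 r c k with hf_def
  set g : ℕ → ℝ := fun k => gs7 r c k with hg_def
  set nbq : ℕ → ℝ := fun j => ((j + c).choose c : ℝ) * q ^ j * (1 - q) ^ (c + 1) with hnbq_def
  have hPk_nonneg : ∀ k, 0 ≤ Pk k := fun k => ENNReal.toReal_nonneg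
  have hT_nonneg : ∀ k, 0 ≤ T k := fun k => ENNReal.toReal_nonneg
  have hf_nonneg : ∀ k, 0 ≤ f k := fun k => fc7_nonneg hr0 hr1 c k
  have hg_nonneg : ∀ k, 0 ≤ g k := fun k => gs7_nonneg hr0 hr1 c k
  have hnb_nonneg : ∀ m, 0 ≤ nb7 p c m := nb7_nonneg hp0.le hp1.le c
  -- measurability
  have hmQ : ∀ k, MeasurableSet {ω | Q ω = k} := fun k => hQmeas (measurableSet_singleton k)
  have hmQA : ∀ k j, MeasurableSet {ω | Q ω = k ∧ A ω = j} := fun k j =>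
    (hmQ k).inter (hAmeas (measurableSet_singleton j))
  have hmQgeA : ∀ k, MeasurableSet {ω | Q ω = k ∧ c + 1 ≤ A ω} := fun k =>
    (hmQ k).inter (hAmeas measurableSet_Ici)
  -- Summable Pk
  have hQtot : ∑' k, μ {ω | Q ω = k} ≠ ⊤ := by
    have hdisj : Pairwise (Function.onFun Disjoint fun k => {ω | Q ω = k}) := by
      intro a b hab
      rw [Function.onFun, Set.disjoint_left]
      rintro ω (ha : Q ω = a) (hb : Q ω = b)
      exact hab (ha ▸ hb ▸ rfl)
    rw [← measure_iUnion hdisj hmQ]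
    exact measure_ne_top μ _
  have hPk_summable : Summable Pk := ENNReal.summable_toReal hQtot
  -- LHS = ∑' k, f k * Pk k
  have hSk : ∀ k, (μ {ω | Q ω = k ∧ c + 1 ≤ A ω}).toReal = f k * Pk k := by
    intro k
    have hUk : {ω | Q ω = k ∧ c + 1 ≤ A ω} = ⋃ j : ℕ, {ω | Q ω = k ∧ A ω = (c + 1) + j} := by
      ext ω
      simp only [Set.mem_setOf_eq, Set.mem_iUnion]
      constructor
      · rintro ⟨h1, h2⟩; exact ⟨A ω - (c + 1), h1, by omega⟩
      · rintro ⟨j, h1, h2⟩; exact ⟨h1, by omega⟩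
    have hdisj : Pairwise (Function.onFun Disjoint
        fun j => {ω | Q ω = k ∧ A ω = (c + 1) + j}) := by
      intro a b hab
      rw [Function.onFun, Set.disjoint_left]
      rintro ω ⟨_, ha⟩ ⟨_, hb⟩
      exact hab (by omega)
    rw [hUk, measure_iUnion hdisj (fun j => hmQA k ((c + 1) + j)),
      ENNReal.tsum_toReal_eq (fun j => measure_ne_top μ _)]
    have hterm : ∀ j : ℕ, (μ {ω | Q ω = k ∧ A ω = (c + 1) + j}).toReal
        = bp7 r k ((c + 1) + j) * Pk k := fun j => hAcond k ((c + 1) + j)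
    rw [tsum_congr hterm, tsum_mul_right]
    congr 1
    -- ∑' j, bp7 r k ((c+1)+j) = f k
    have hinj : Function.Injective (fun j : ℕ => (c + 1) + j) := fun a b h => by simpa using h
    have hsupp : Function.support (fun i => if c + 1 ≤ i then bp7 r k i else 0)
        ⊆ Set.range (fun j : ℕ => (c + 1) + j) := by
      intro i hi
      rw [Function.mem_support] at hi
      by_cases h : c + 1 ≤ i
      · exact ⟨i - (c + 1), by simp; omega⟩
      · rw [if_neg h] at hi; exact absurd rfl hi
    have htr := Function.Injective.tsum_eq hinj
      (f := fun i => if c + 1 ≤ i then bp7 r k i else 0) hsupp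
    have hlhs : (fun j : ℕ => (if c + 1 ≤ (c + 1) + j then bp7 r k ((c + 1) + j) else 0))
        = fun j : ℕ => bp7 r k ((c + 1) + j) := by
      funext j; rw [if_pos (by omega)]
    rw [hlhs] at htr
    rw [htr]
    rw [tsum_eq_sum (s := Finset.Ico (c + 1) (k + 1)) (by
      intro i hi
      simp only [Finset.mem_Ico, not_and, not_lt] at hi
      by_cases h : c + 1 ≤ i
      · rw [if_pos h, bp7_eq_zero (by omega : k < i)]
      · rw [if_neg h])]
    rw [hf_def]
    apply Finset.sum_congr rfl
    intro i hi
    simp only [Finset.mem_Ico] at hi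
    rw [if_pos hi.1]
  have hLHS : (μ {ω | c + 1 ≤ A ω}).toReal = ∑' k, f k * Pk k := by
    have hU : {ω | c + 1 ≤ A ω} = ⋃ k : ℕ, {ω | Q ω = k ∧ c + 1 ≤ A ω} := by
      ext ω
      simp only [Set.mem_setOf_eq, Set.mem_iUnion]
      exact ⟨fun h => ⟨Q ω, rfl, h⟩, fun ⟨k, _, h⟩ => h⟩
    have hdisj : Pairwise (Function.onFun Disjoint
        fun k => {ω | Q ω = k ∧ c + 1 ≤ A ω}) := by
      intro a b hab
      rw [Function.onFun, Set.disjoint_left]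
      rintro ω ⟨ha, _⟩ ⟨hb, _⟩
      exact hab (ha ▸ hb ▸ rfl)
    rw [hU, measure_iUnion hdisj hmQgeA,
      ENNReal.tsum_toReal_eq (fun k => measure_ne_top μ _)]
    exact tsum_congr hSk
  -- T recursion
  have hT_rec : ∀ k, T k = Pk k + T (k + 1) := by
    intro k
    have hsplit : {ω | k ≤ Q ω} = {ω | Q ω = k} ∪ {ω | k + 1 ≤ Q ω} := by
      ext ω
      simp only [Set.mem_setOf_eq, Set.mem_union]
      omega
    have hdisj : Disjoint {ω | Q ω = k} {ω | k + 1 ≤ Q ω} := by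
      rw [Set.disjoint_left]
      rintro ω (h1 : Q ω = k) (h2 : k + 1 ≤ Q ω)
      omega
    rw [hT_def, hPk_def]
    simp only
    rw [hsplit, measure_union hdisj (hQmeas measurableSet_Ici),
      ENNReal.toReal_add (measure_ne_top μ _) (measure_ne_top μ _)]
  -- Abel summation
  have habel : ∀ N : ℕ, ∑ k ∈ Finset.range (N + 1), f k * Pk k + f N * T (N + 1)
      = ∑ k ∈ Finset.range (N + 1), g k * T k := by
    intro N
    induction N with
    | zero =>
      simp [hf_def, hg_def, gs7, fc7_zero]
    | succ N ih =>
      rw [Finset.sum_range_succ, Finset.sum_range_succ (fun k => g k * T k)]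
      rw [← ih]
      have hgN : g (N + 1) = f (N + 1) - f N := by
        rw [hg_def, hf_def]; simp [gs7]
      have hTrec := hT_rec (N + 1)
      rw [hgN]
      linear_combination (-f (N + 1)) * hTrec
  -- summability of nb7 and nbq
  have hpnorm : ‖p‖ < 1 := by rw [Real.norm_eq_abs, abs_lt]; constructor <;> nlinarith
  have hnb_summable : Summable (nb7 p c) := by
    have h := (summable_choose_mul_geometric_of_norm_lt_one c hpnorm).mul_right ((1 - p) ^ (c + 1))
    exact h.congr (fun n => rfl)
  have hqnorm : ‖q‖ < 1 := by rw [Real.norm_eq_abs, abs_lt]; constructor <;> linarith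
  have hnbq_nonneg : ∀ j, 0 ≤ nbq j := by
    intro j
    exact mul_nonneg (mul_nonneg (Nat.cast_nonneg _) (pow_nonneg hq0 _)) (pow_nonneg h1q _)
  have hnbq_summable : Summable nbq := by
    have h := (summable_choose_mul_geometric_of_norm_lt_one c hqnorm).mul_right ((1 - q) ^ (c + 1))
    exact h.congr (fun n => rfl)
  -- tails G
  set G : ℕ → ℝ := fun k => ∑' n : ℕ, nb7 p c (k + n) with hG_def
  have hG_nonneg : ∀ k, 0 ≤ G k := fun k => tsum_nonneg (fun n => hnb_nonneg _)
  have hTG : ∀ k, T k ≤ G k := by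
    intro k
    refine (hQdom k).trans_eq (tsum_congr fun n => ?_)
    have e1 : k + n + (c + 1) - 1 = (k + n) + c := by omega
    have e2 : c + 1 - 1 = c := by omega
    rw [e1, e2, nb7]
  -- the kernel H
  set H : ℕ → ℕ → ℝ := fun k m => if k ≤ m then g k * nb7 p c m else 0 with hH_def
  have hH_nonneg : ∀ k m, 0 ≤ H k m := by
    intro k m
    rw [hH_def]
    dsimp only
    split
    · exact mul_nonneg (hg_nonneg k) (hnb_nonneg m)
    · exact le_refl 0
  have hH_col_summable : ∀ m, Summable (fun k => H k m) := by
    intro m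
    apply summable_of_ne_finset_zero (s := Finset.range (m + 1))
    intro k hk
    simp only [Finset.mem_range] at hk
    exact if_neg (by omega)
  have hH_row : ∀ k, ∑' m, H k m = g k * G k := by
    intro k
    have hinj : Function.Injective (fun n : ℕ => k + n) := fun a b h => by simpa using h
    have hsupp : Function.support (H k) ⊆ Set.range (fun n : ℕ => k + n) := by
      intro m hm
      rw [Function.mem_support] at hm
      by_cases h : k ≤ m
      · exact ⟨m - k, by simp; omega⟩
      · rw [hH_def] at hm; simp only at hm; rw [if_neg h] at hm; exact absurd rfl hm
    have htr := Function.Injective.tsum_eq hinj (f := H k) hsupp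
    rw [← htr]
    have : (fun n : ℕ => H k (k + n)) = fun n : ℕ => g k * nb7 p c (k + n) := by
      funext n
      rw [hH_def]
      exact if_pos (by omega)
    rw [this, tsum_mul_left]
  have hH_col : ∀ m, ∑' k, H k m = f m * nb7 p c m := by
    intro m
    rw [tsum_eq_sum (s := Finset.range (m + 1)) (by
      intro k hk
      simp only [Finset.mem_range] at hk
      exact if_neg (by omega))]
    have : ∀ k ∈ Finset.range (m + 1), H k m = g k * nb7 p c m := by
      intro k hk
      simp only [Finset.mem_range] at hk
      exact if_pos (by omega)
    rw [Finset.sum_congr rfl this, ← Finset.sum_mul]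
    congr 1
    rw [hg_def, hf_def]
    exact gs7_telescope r c m
  have hHunc : Summable (Function.uncurry (fun k m => H k m)) := by
    have h1 : Summable (fun x : ℕ × ℕ => H x.2 x.1) := by
      rw [summable_prod_of_nonneg (f := fun x : ℕ × ℕ => H x.2 x.1) (fun x => hH_nonneg x.2 x.1)]
      refine ⟨fun m => hH_col_summable m, ?_⟩
      apply Summable.of_nonneg_of_le (fun m => tsum_nonneg (fun k => hH_nonneg k m))
        (fun m => ?_) hnb_summable
      rw [hH_col m]
      exact mul_le_of_le_one_left (hnb_nonneg m) (fc7_le_one hr0 hr1 c m)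
    exact h1.prod_symm.congr (fun x => rfl)
  have hgG_summable : Summable (fun k => g k * G k) := by
    have h := ((summable_prod_of_nonneg (fun x => hH_nonneg x.1 x.2)).mp hHunc).2
    exact h.congr (fun k => hH_row k)
  have hswap1 : ∑' k, g k * G k = ∑' m, f m * nb7 p c m := by
    calc ∑' k, g k * G k = ∑' k, ∑' m, H k m := tsum_congr (fun k => (hH_row k).symm)
      _ = ∑' m, ∑' k, H k m :=
          (hHunc.tsum_comm' (fun k => hHunc.prod_factor k) hH_col_summable).symm
      _ = ∑' m, f m * nb7 p c m := tsum_congr hH_col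
  -- the kernel V
  set V : ℕ → ℕ → ℝ := fun m j => if c + 1 ≤ j then nb7 p c m * bp7 r m j else 0 with hV_def
  have hV_nonneg : ∀ m j, 0 ≤ V m j := by
    intro m j
    rw [hV_def]
    dsimp only
    split
    · exact mul_nonneg (hnb_nonneg m) (bp7_nonneg hr0 hr1 m j)
    · exact le_refl 0
  have hV_row_summable : ∀ m, Summable (fun j => V m j) := by
    intro m
    apply summable_of_ne_finset_zero (s := Finset.Ico (c + 1) (m + 1))
    intro j hj
    simp only [Finset.mem_Ico, not_and, not_lt] at hj
    by_cases h : c + 1 ≤ j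
    · have : m < j := by have := hj h; omega
      simp only [hV_def]
      rw [if_pos h, bp7_eq_zero this, mul_zero]
    · exact if_neg h
  have hV_row : ∀ m, ∑' j, V m j = nb7 p c m * f m := by
    intro m
    rw [tsum_eq_sum (s := Finset.Ico (c + 1) (m + 1)) (by
      intro j hj
      simp only [Finset.mem_Ico, not_and, not_lt] at hj
      by_cases h : c + 1 ≤ j
      · have hmj : m < j := by have := hj h; omega
        simp only [hV_def]
        rw [if_pos h, bp7_eq_zero hmj, mul_zero]
      · exact if_neg h)]
    have : ∀ j ∈ Finset.Ico (c + 1) (m + 1), V m j = nb7 p c m * bp7 r m j := by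
      intro j hj
      simp only [Finset.mem_Ico] at hj
      exact if_pos hj.1
    rw [Finset.sum_congr rfl this, ← Finset.mul_sum]
    rfl
  have hV_col_summable : ∀ j, Summable (fun m => V m j) := by
    intro j
    by_cases h : c + 1 ≤ j
    · have : (fun m => V m j) = fun m => nb7 p c m * bp7 r m j := by
        funext m; exact if_pos h
      rw [this]
      exact (thin7 hp0 hp1 hr0 hr1 c j).summable
    · have : (fun m => V m j) = fun _ => 0 := by
        funext m; exact if_neg h
      rw [this]
      exact summable_zero
  have hV_col : ∀ j, ∑' m, V m j = (if c + 1 ≤ j then nbq j else 0) := by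
    intro j
    by_cases h : c + 1 ≤ j
    · have he : (fun m => V m j) = fun m => nb7 p c m * bp7 r m j := by
        funext m; exact if_pos h
      rw [he, if_pos h, (thin7 hp0 hp1 hr0 hr1 c j).tsum_eq]
    · have he : (fun m => V m j) = fun _ => (0:ℝ) := by
        funext m; exact if_neg h
      rw [he, if_neg h, tsum_zero]
  have hVunc : Summable (fun x : ℕ × ℕ => V x.2 x.1) := by
    rw [summable_prod_of_nonneg (f := fun x : ℕ × ℕ => V x.2 x.1) (fun x => hV_nonneg x.2 x.1)]
    refine ⟨fun j => hV_col_summable j, ?_⟩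
    apply Summable.of_nonneg_of_le (fun j => tsum_nonneg (fun m => hV_nonneg m j))
      (fun j => ?_) hnbq_summable
    rw [hV_col j]
    split
    · exact le_refl _
    · exact hnbq_nonneg j
  have hswap2 : ∑' m, nb7 p c m * f m = ∑' j, (if c + 1 ≤ j then nbq j else 0) := by
    calc ∑' m, nb7 p c m * f m = ∑' m, ∑' j, V m j := tsum_congr (fun m => (hV_row m).symm)
      _ = ∑' j, ∑' m, V m j :=
          (Summable.tsum_comm' (f := fun j m => V m j) (hVunc.congr (fun x => rfl)) hV_col_summable hV_row_summable)
      _ = ∑' j, (if c + 1 ≤ j then nbq j else 0) := tsum_congr hV_col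
  -- final reindexing
  have hfinal : ∑' j, (if c + 1 ≤ j then nbq j else 0)
      = ∑' n : ℕ, ((c + 1 + n + (c + 1) - 1).choose (c + 1 - 1) : ℝ) * q ^ (c + 1 + n)
        * (1 - q) ^ (c + 1) := by
    have hinj : Function.Injective (fun n : ℕ => (c + 1) + n) := fun a b h => by simpa using h
    have hsupp : Function.support (fun j => if c + 1 ≤ j then nbq j else 0)
        ⊆ Set.range (fun n : ℕ => (c + 1) + n) := by
      intro j hj
      rw [Function.mem_support] at hj
      by_cases h : c + 1 ≤ j
      · exact ⟨j - (c + 1), by simp; omega⟩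
      · rw [if_neg h] at hj; exact absurd rfl hj
    rw [← Function.Injective.tsum_eq hinj hsupp]
    apply tsum_congr
    intro n
    rw [if_pos (by omega : c + 1 ≤ (c + 1) + n)]
    rw [hnbq_def]
    have e1 : c + 1 + n + (c + 1) - 1 = ((c + 1) + n) + c := by omega
    have e2 : c + 1 - 1 = c := by omega
    rw [e1, e2]
  -- conclusion
  rw [hLHS]
  apply Real.tsum_le_of_sum_range_le
    (fun k => mul_nonneg (hf_nonneg k) (hPk_nonneg k))
  intro N
  have hRHS_nonneg : (0:ℝ) ≤ ∑' n : ℕ, ((c + 1 + n + (c + 1) - 1).choose (c + 1 - 1) : ℝ)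
      * q ^ (c + 1 + n) * (1 - q) ^ (c + 1) := by
    apply tsum_nonneg
    intro n
    exact mul_nonneg (mul_nonneg (Nat.cast_nonneg _) (pow_nonneg hq0 _)) (pow_nonneg h1q _)
  match N with
  | 0 => simpa using hRHS_nonneg
  | Nat.succ M =>
    calc ∑ k ∈ Finset.range (M + 1), f k * Pk k
        ≤ ∑ k ∈ Finset.range (M + 1), f k * Pk k + f M * T (M + 1) := by
          nlinarith [mul_nonneg (hf_nonneg M) (hT_nonneg (M + 1))]
      _ = ∑ k ∈ Finset.range (M + 1), g k * T k := habel M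
      _ ≤ ∑ k ∈ Finset.range (M + 1), g k * G k := by
          apply Finset.sum_le_sum
          intro k _
          exact mul_le_mul_of_nonneg_left (hTG k) (hg_nonneg k)
      _ ≤ ∑' k, g k * G k := by
          apply hgG_summable.sum_le_tsum (Finset.range (M + 1))
            (fun k _ => mul_nonneg (hg_nonneg k) (hG_nonneg k))
      _ = ∑' m, f m * nb7 p c m := hswap1
      _ = ∑' m, nb7 p c m * f m := tsum_congr (fun m => mul_comm _ _)
      _ = ∑' j, (if c + 1 ≤ j then nbq j else 0) := hswap2
      _ = _ := hfinal
end

section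
/- For p = 0.08, with c = 4p(1-p) and α = (p + (1-p)·log(1-p))/(2(1-p)p²), the quantity p·(1 - 2αc/(1-c)²) is at least 0.053. -/
theorem stmt_15 :
    let p : ℝ := 0.08
    let c : ℝ := 4 * p * (1 - p)
    let α : ℝ := (p + (1 - p) * Real.log (1 - p)) / (2 * (1 - p) * p ^ 2)
    (0.053 : ℝ) ≤ p * (1 - 2 * α * c / (1 - c) ^ 2) := by
  intro p c α
  have hlog : Real.log (1 - 0.08) ≤ -0.08337 := by
    have h := Real.abs_log_sub_add_sum_range_le (x := 0.08)
      (by rw [show |(0.08:ℝ)| = 0.08 from abs_of_pos (by norm_num)]; norm_num) 4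
    rw [abs_le] at h
    have h2 := h.2
    rw [show |(0.08:ℝ)| = 0.08 from abs_of_pos (by norm_num)] at h2
    simp [Finset.sum_range_succ] at h2
    norm_num at h2 ⊢
    linarith
  show (0.053 : ℝ) ≤ p * (1 - 2 * α * c / (1 - c) ^ 2)
  simp only [p, c, α]
  set L := Real.log (1 - 0.08) with hL
  have key : (0.08 : ℝ) * (1 - 2 * ((0.08 + (1 - 0.08) * L) / (2 * (1 - 0.08) * 0.08 ^ 2)) * (4 * 0.08 * (1 - 0.08)) / (1 - 4 * 0.08 * (1 - 0.08)) ^ 2)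
      = -2736038/4862025 + (-1437500/194481) * L := by
    field_simp
    ring
  rw [key]
  nlinarith [hlog]
end

section
/- A laminar family F with capacities defines a matroid: the collection I = {X ⊆ U : |X ∩ A| ≤ μ(A) for all A ∈ F} satisfies the matroid axioms (nonempty, downward closed, and the exchange property). -/
/-- Independence for a laminar family with capacities. -/
def laminarIndep {α : Type*} [DecidableEq α]
    (F : Finset (Finset α)) (cap : Finset α → ℕ) (X : Finset α) : Prop :=
  ∀ A ∈ F, (X ∩ A).card ≤ cap A

/-- A laminar family with capacities defines a matroid: the independent sets
are nonempty (contain ∅), downward closed, and satisfy the exchange property. -/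
theorem stmt_17 {α : Type*} [DecidableEq α]
    (F : Finset (Finset α)) (cap : Finset α → ℕ)
    (hlam : ∀ A ∈ F, ∀ B ∈ F, A ⊆ B ∨ B ⊆ A ∨ Disjoint A B) :
    laminarIndep F cap (∅ : Finset α) ∧
    (∀ X Y : Finset α, laminarIndep F cap Y → X ⊆ Y → laminarIndep F cap X) ∧
    (∀ X Y : Finset α, laminarIndep F cap X → laminarIndep F cap Y →
      X.card < Y.card → ∃ y ∈ Y, y ∉ X ∧ laminarIndep F cap (insert y X)) := by
  refine ⟨fun A hA => by simp, ?_, ?_⟩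
  · intro X Y hY hXY A hA
    exact le_trans (Finset.card_le_card
      (Finset.inter_subset_inter hXY (Finset.Subset.refl A))) (hY A hA)
  · intro X Y hX hY hcard
    by_contra hcon
    push_neg at hcon
    -- For each y ∈ Y \ X, pick a maximal tight set containing y.
    have hstep : ∀ y ∈ Y \ X, ∃ A, A ∈ F ∧ y ∈ A ∧ (X ∩ A).card = cap A ∧
        ∀ B ∈ F, y ∈ B → (X ∩ B).card = cap B → B.card ≤ A.card := by
      intro y hy
      rw [Finset.mem_sdiff] at hy
      have h1 := hcon y hy.1 hy.2
      simp only [laminarIndep, not_forall, not_le, exists_prop] at h1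
      obtain ⟨A, hAF, hAc⟩ := h1
      have hyA : y ∈ A := by
        by_contra hyA
        rw [Finset.insert_inter_of_notMem hyA] at hAc
        exact absurd (hX A hAF) (not_le.mpr hAc)
      have htight : (X ∩ A).card = cap A := by
        rw [Finset.insert_inter_of_mem hyA] at hAc
        have h2 := Finset.card_insert_le y (X ∩ A)
        have h3 := hX A hAF
        omega
      have hne : (F.filter (fun B => y ∈ B ∧ (X ∩ B).card = cap B)).Nonempty :=
        ⟨A, Finset.mem_filter.mpr ⟨hAF, hyA, htight⟩⟩
      obtain ⟨C, hC, hCmax⟩ := Finset.exists_max_image _ Finset.card hne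
      rw [Finset.mem_filter] at hC
      exact ⟨C, hC.1, hC.2.1, hC.2.2, fun B hB hyB htB =>
        hCmax B (Finset.mem_filter.mpr ⟨hB, hyB, htB⟩)⟩
    choose g hgF hgy hgt hgmax using hstep
    -- Maximal tight sets are pairwise equal or disjoint.
    have hdisj : ∀ y (hy : y ∈ Y \ X) z (hz : z ∈ Y \ X),
        g y hy = g z hz ∨ Disjoint (g y hy) (g z hz) := by
      intro y hy z hz
      rcases hlam _ (hgF y hy) _ (hgF z hz) with h | h | h
      · exact Or.inl (Finset.eq_of_subset_of_card_le h
          (hgmax y hy _ (hgF z hz) (h (hgy y hy)) (hgt z hz)))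
      · exact Or.inl (Finset.eq_of_subset_of_card_le h
          (hgmax z hz _ (hgF y hy) (h (hgy z hz)) (hgt y hy))).symm
      · exact Or.inr h
    set T : Finset (Finset α) := (Y \ X).attach.image (fun y => g y.1 y.2) with hT
    have hTmem : ∀ A ∈ T, ∃ y, ∃ hy : y ∈ Y \ X, g y hy = A := by
      intro A hA
      rw [hT, Finset.mem_image] at hA
      obtain ⟨y, _, hgyA⟩ := hA
      exact ⟨y.1, y.2, hgyA⟩
    have hTdisj : ∀ A ∈ T, ∀ B ∈ T, A ≠ B → Disjoint A B := by
      intro A hA B hB hAB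
      obtain ⟨y, hy, rfl⟩ := hTmem A hA
      obtain ⟨z, hz, rfl⟩ := hTmem B hB
      rcases hdisj y hy z hz with h | h
      · exact absurd h hAB
      · exact h
    -- counting inequality per tight set
    have key : ∀ A ∈ T, ((Y \ X) ∩ A).card ≤ ((X \ Y) ∩ A).card := by
      intro A hA
      obtain ⟨y, hy, rfl⟩ := hTmem A hA
      have h : (Y ∩ g y hy).card ≤ (X ∩ g y hy).card := by
        rw [hgt y hy]; exact hY _ (hgF y hy)
      set A := g y hy
      have e1 : (Y \ X) ∩ A = (Y ∩ A) \ (X ∩ A) := by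
        ext a; simp only [Finset.mem_inter, Finset.mem_sdiff]; tauto
      have e2 : (X \ Y) ∩ A = (X ∩ A) \ (Y ∩ A) := by
        ext a; simp only [Finset.mem_inter, Finset.mem_sdiff]; tauto
      have c1 := Finset.card_sdiff_add_card_inter (Y ∩ A) (X ∩ A)
      have c2 := Finset.card_sdiff_add_card_inter (X ∩ A) (Y ∩ A)
      rw [Finset.inter_comm (X ∩ A)] at c2
      rw [e1, e2]
      omega
    have hbi1 : T.biUnion (fun A => (Y \ X) ∩ A) = Y \ X := by
      apply Finset.Subset.antisymm
      · intro a ha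
        rw [Finset.mem_biUnion] at ha
        obtain ⟨A, _, haA⟩ := ha
        exact (Finset.mem_inter.mp haA).1
      · intro a ha
        rw [Finset.mem_biUnion]
        refine ⟨g a ha, ?_, Finset.mem_inter.mpr ⟨ha, hgy a ha⟩⟩
        rw [hT, Finset.mem_image]
        exact ⟨⟨a, ha⟩, Finset.mem_attach _ _, rfl⟩
    have hd1 : ∀ A ∈ T, ∀ B ∈ T, A ≠ B → Disjoint ((Y \ X) ∩ A) ((Y \ X) ∩ B) :=
      fun A hA B hB hAB => (hTdisj A hA B hB hAB).mono
        Finset.inter_subset_right Finset.inter_subset_right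
    have hd2 : ∀ A ∈ T, ∀ B ∈ T, A ≠ B → Disjoint ((X \ Y) ∩ A) ((X \ Y) ∩ B) :=
      fun A hA B hB hAB => (hTdisj A hA B hB hAB).mono
        Finset.inter_subset_right Finset.inter_subset_right
    have h1 : (Y \ X).card = ∑ A ∈ T, ((Y \ X) ∩ A).card := by
      rw [← Finset.card_biUnion hd1, hbi1]
    have h2 : ∑ A ∈ T, ((X \ Y) ∩ A).card ≤ (X \ Y).card := by
      rw [← Finset.card_biUnion hd2]
      exact Finset.card_le_card (Finset.biUnion_subset.mpr
        (fun A _ => Finset.inter_subset_left))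
    have h3 : ∑ A ∈ T, ((Y \ X) ∩ A).card ≤ ∑ A ∈ T, ((X \ Y) ∩ A).card :=
      Finset.sum_le_sum key
    have c1 := Finset.card_sdiff_add_card_inter Y X
    have c2 := Finset.card_sdiff_add_card_inter X Y
    rw [Finset.inter_comm X Y] at c2
    omega
end
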